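/- For every δ ∈ (0,1) and p ∈ [1,∞] there exists C > 0 such that for every dyadic number N and every f ∈ L^p(ℝ²), the commutator satisfies ‖[Δ_N, ⟨·⟩^δ] f‖_{L^p} = ‖Δ_N(⟨·⟩^δ f) − ⟨·⟩^δ Δ_N f‖_{L^p} ≤ C N^{-1} ‖f‖_{L^p}. -/

import Mathlib

noncomputable section

open MeasureTheory Complex SchwartzMap
open scoped ENNReal NNReal FourierTransform SchwartzMap

abbrev R2 : Type := EuclideanSpace ℝ (Fin 2)

/-- Japanese bracket `⟨x⟩ = (1+|x|²)^{1/2}`. -/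
def jap (x : R2) : ℝ := Real.sqrt (1 + ‖x‖ ^ 2)

/-- Weighted `L^p` norm `‖⟨·⟩^μ f‖_{L^p}`. -/
def wLp {E : Type*} [NormedAddCommGroup E] (p : ℝ≥0∞) (μ : ℝ) (f : R2 → E) : ℝ≥0∞ :=
  eLpNorm (fun x => jap x ^ μ * ‖f x‖) p volume

/-- Dyadic numbers `1/2, 1, 2, 4, …` indexed by `ℕ`. -/
def dy (n : ℕ) : ℝ := if n = 0 then 1 / 2 else 2 ^ (n - 1)

/-- Littlewood–Paley block `Δ_N f`. -/
def LP {E : Type*} [NormedAddCommGroup E] [NormedSpace ℝ E] [NormedSpace ℂ E]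
    (K L : R2 → ℂ) (n : ℕ) (f : R2 → E) : R2 → E := fun x =>
  if n = 0 then ∫ y, L (x - y) • f y
  else ∫ y, (dy n ^ 2 : ℝ) • (K (dy n • (x - y)) • f y)

/-- LP-based weighted Sobolev norm `‖f‖_{H^α_μ} = (Σ_N N^{2α} ‖Δ_N f‖²_{L²_μ})^{1/2}`. -/
def wSobLP (K L : R2 → ℂ) (α μ : ℝ) (f : R2 → ℂ) : ℝ≥0∞ :=
  (∑' n : ℕ, ENNReal.ofReal (dy n ^ (2 * α)) * wLp 2 μ (LP K L n f) ^ 2) ^ (1 / 2 : ℝ)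

/-- Weighted Hölder–Zygmund norm `‖f‖_{C^α_μ} = sup_N N^α ‖Δ_N f‖_{L^∞_μ}`. -/
def wHold (K L : R2 → ℂ) (α μ : ℝ) (f : R2 → ℂ) : ℝ≥0∞ :=
  ⨆ n : ℕ, ENNReal.ofReal (dy n ^ α) * wLp ⊤ μ (LP K L n f)

/-- `K, L` are Schwartz kernels of a Littlewood–Paley partition of unity:
`𝓕 K` is supported in the annulus `{1/2 ≤ |ξ| ≤ 2}`, `𝓕 L` in the ball `{|ξ| < 1}`,
and `Id = Σ_{N dyadic} Δ_N`. -/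
structure IsLP (K L : 𝓢(R2, ℂ)) : Prop where
  suppK : Function.support (𝓕 ⇑K) ⊆ {ξ : R2 | 1 / 2 ≤ ‖ξ‖ ∧ ‖ξ‖ ≤ 2}
  suppL : Function.support (𝓕 ⇑L) ⊆ {ξ : R2 | ‖ξ‖ < 1}
  partition : ∀ (f : 𝓢(R2, ℂ)) (x : R2), HasSum (fun n => LP ⇑K ⇑L n ⇑f x) (f x)

/-! `Δ_N` is convolution with `φ_N` (`L`, resp. `N² K(N ·)`), so
`[Δ_N, g] f (x) = ∫ φ_N(x - y) (g y - g x) f y dy`. For `δ ≤ 1` the weight `g = ⟨·⟩^δ` is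
`1`-Lipschitz, so the commutator is dominated pointwise by the convolution of `|f|` with
`|φ_N(z)| |z|`. Young's inequality bounds its `L^p` norm by `‖ |z| φ_N ‖_{L¹} ‖f‖_{L^p}`, and
by scaling `‖ |z| φ_N ‖_{L¹} = N⁻¹ ‖ |z| K ‖_{L¹}` for `N ≥ 1`. -/

namespace MeasureTheory

section Young

variable {G : Type*} [MeasurableSpace G] [AddGroup G] [MeasurableAdd₂ G] [MeasurableNeg G]
  {μ : Measure G} [SFinite μ] [μ.IsAddLeftInvariant] {w F : G → ℝ≥0∞}

theorem lintegral_lconvolution (hw : AEMeasurable w μ) (hF : AEMeasurable F μ) :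
    ∫⁻ x, (w ⋆ₗ[μ] F) x ∂μ = (∫⁻ y, w y ∂μ) * ∫⁻ x, F x ∂μ := by
  simp only [lconvolution_def]
  rw [lintegral_lintegral_swap (by fun_prop), ← lintegral_mul_const'' _ hw]
  refine lintegral_congr fun y => ?_
  have hFy : AEMeasurable (fun x => F (-y + x)) μ :=
    hF.comp_quasiMeasurePreserving (measurePreserving_add_left μ (-y)).quasiMeasurePreserving
  rw [lintegral_const_mul'' _ hFy, lintegral_add_left_eq_self F (-y)]

/-- Hölder's inequality against the measure `w ∂μ`. -/
theorem lconvolution_rpow_le (hw : AEMeasurable w μ) (hF : AEMeasurable F μ) {q : ℝ}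
    (hq : 1 ≤ q) (x : G) :
    (w ⋆ₗ[μ] F) x ^ q ≤ (∫⁻ y, w y ∂μ) ^ (q - 1) * (w ⋆ₗ[μ] fun y => F y ^ q) x := by
  have hq0 : 0 < q := by linarith
  have hsplit : ∀ y, w y * F (-y + x) = w y ^ (1 - q⁻¹) * (w y * F (-y + x) ^ q) ^ q⁻¹ := by
    intro y
    rw [ENNReal.mul_rpow_of_nonneg _ _ (by positivity), ← ENNReal.rpow_mul,
      mul_inv_cancel₀ hq0.ne', ENNReal.rpow_one, ← mul_assoc,
      ← ENNReal.rpow_add_of_nonneg _ _ (by simp [inv_le_one_of_one_le₀ hq]) (by positivity),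
      sub_add_cancel, ENNReal.rpow_one]
  have holder := ENNReal.lintegral_mul_norm_pow_le (μ := μ) hw
    (g := fun y => w y * F (-y + x) ^ q) (by fun_prop)
    (sub_nonneg.2 (inv_le_one_of_one_le₀ hq)) (inv_nonneg.2 hq0.le) (sub_add_cancel 1 q⁻¹)
  simp only [← hsplit] at holder
  calc (w ⋆ₗ[μ] F) x ^ q
      ≤ ((∫⁻ y, w y ∂μ) ^ (1 - q⁻¹) * ((w ⋆ₗ[μ] fun y => F y ^ q) x) ^ q⁻¹) ^ q :=
        ENNReal.rpow_le_rpow holder hq0.le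
    _ = (∫⁻ y, w y ∂μ) ^ (q - 1) * (w ⋆ₗ[μ] fun y => F y ^ q) x := by
        rw [ENNReal.mul_rpow_of_nonneg _ _ hq0.le, ← ENNReal.rpow_mul, ← ENNReal.rpow_mul,
          inv_mul_cancel₀ hq0.ne', ENNReal.rpow_one, sub_mul, one_mul, inv_mul_cancel₀ hq0.ne']

theorem lintegral_lconvolution_rpow_le (hw : AEMeasurable w μ) (hF : AEMeasurable F μ) {q : ℝ}
    (hq : 1 ≤ q) :
    ∫⁻ x, (w ⋆ₗ[μ] F) x ^ q ∂μ ≤ (∫⁻ y, w y ∂μ) ^ q * ∫⁻ x, F x ^ q ∂μ := by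
  have hFq : AEMeasurable (fun y => F y ^ q) μ := hF.pow_const q
  calc ∫⁻ x, (w ⋆ₗ[μ] F) x ^ q ∂μ
      ≤ ∫⁻ x, (∫⁻ y, w y ∂μ) ^ (q - 1) * (w ⋆ₗ[μ] fun y => F y ^ q) x ∂μ :=
        lintegral_mono fun x => lconvolution_rpow_le hw hF hq x
    _ = (∫⁻ y, w y ∂μ) ^ (q - 1) * ((∫⁻ y, w y ∂μ) ^ (1 : ℝ) * ∫⁻ x, F x ^ q ∂μ) := by
        rw [lintegral_const_mul'' _ (aemeasurable_lconvolution hw hFq),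
          lintegral_lconvolution hw hFq, ENNReal.rpow_one]
    _ = (∫⁻ y, w y ∂μ) ^ q * ∫⁻ x, F x ^ q ∂μ := by
        rw [← mul_assoc, ← ENNReal.rpow_add_of_nonneg _ _ (by linarith) zero_le_one,
          sub_add_cancel]

theorem lconvolution_le_mul_eLpNormEssSup (hw : AEMeasurable w μ) (x : G) :
    (w ⋆ₗ[μ] F) x ≤ (∫⁻ y, w y ∂μ) * eLpNormEssSup F μ := by
  have hbound : ∀ᵐ y ∂μ, F (-y + x) ≤ eLpNormEssSup F μ :=
    ((quasiMeasurePreserving_add_right μ x).comp (quasiMeasurePreserving_neg μ)).ae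
      (ae_le_eLpNormEssSup (f := F))
  calc (w ⋆ₗ[μ] F) x ≤ ∫⁻ y, w y * eLpNormEssSup F μ ∂μ :=
        lintegral_mono_ae (hbound.mono fun y hy => mul_le_mul_right hy _)
    _ = (∫⁻ y, w y ∂μ) * eLpNormEssSup F μ := lintegral_mul_const'' _ hw

/-- Young's convolution inequality. -/
theorem eLpNorm_lconvolution_le (hw : AEMeasurable w μ) (hF : AEMeasurable F μ) {p : ℝ≥0∞}
    (hp : 1 ≤ p) :
    eLpNorm (w ⋆ₗ[μ] F) p μ ≤ (∫⁻ y, w y ∂μ) * eLpNorm F p μ := by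
  rcases eq_or_ne p ∞ with rfl | hp_top
  · simp only [eLpNorm_exponent_top]
    exact eLpNormEssSup_le_of_ae_enorm_bound
      (ae_of_all _ fun x => lconvolution_le_mul_eLpNormEssSup hw x)
  have hp0 : p ≠ 0 := (zero_lt_one.trans_le hp).ne'
  have hq : 1 ≤ p.toReal := by simpa using ENNReal.toReal_mono hp_top hp
  have hq0 : 0 < p.toReal := by linarith
  simp only [eLpNorm_eq_lintegral_rpow_enorm_toReal hp0 hp_top, enorm_eq_self]
  calc (∫⁻ x, (w ⋆ₗ[μ] F) x ^ p.toReal ∂μ) ^ (1 / p.toReal)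
      ≤ ((∫⁻ y, w y ∂μ) ^ p.toReal * ∫⁻ x, F x ^ p.toReal ∂μ) ^ (1 / p.toReal) :=
        ENNReal.rpow_le_rpow (lintegral_lconvolution_rpow_le hw hF hq) (by positivity)
    _ = (∫⁻ y, w y ∂μ) * (∫⁻ x, F x ^ p.toReal ∂μ) ^ (1 / p.toReal) := by
        rw [ENNReal.mul_rpow_of_nonneg _ _ (by positivity), ← ENNReal.rpow_mul,
          mul_one_div_cancel hq0.ne', ENNReal.rpow_one]

end Young

theorem lconvolution_eq_lintegral_sub {G : Type*} [MeasurableSpace G] [AddGroup G]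
    [MeasurableAdd G] [MeasurableNeg G] {μ : Measure G} [μ.IsAddLeftInvariant] [μ.IsNegInvariant]
    (w F : G → ℝ≥0∞) (x : G) :
    (w ⋆ₗ[μ] F) x = ∫⁻ y, w (x - y) * F y ∂μ := by
  rw [lconvolution_def, ← lintegral_sub_left_eq_self _ x]
  simp only [neg_sub, sub_add_cancel]

theorem ae_lt_top_of_eLpNorm_ne_top {α : Type*} [MeasurableSpace α]
    {μ : Measure α} {F : α → ℝ≥0∞} {p : ℝ≥0∞} (hF : AEMeasurable F μ) (hp : p ≠ 0)
    (h : eLpNorm F p μ ≠ ∞) : ∀ᵐ x ∂μ, F x < ∞ := by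
  rcases eq_or_ne p ∞ with rfl | hp_top
  · rw [eLpNorm_exponent_top] at h
    filter_upwards [ae_le_eLpNormEssSup (f := F) (μ := μ)] with x hx
    exact hx.trans_lt h.lt_top
  have hq0 : 0 < p.toReal := ENNReal.toReal_pos hp hp_top
  have hint := lintegral_rpow_enorm_lt_top_of_eLpNorm_lt_top hp hp_top h.lt_top
  simp only [enorm_eq_self] at hint
  filter_upwards [ae_lt_top' (hF.pow_const p.toReal) hint.ne] with x hx
  exact (ENNReal.rpow_lt_top_iff_of_pos hq0).1 hx

end MeasureTheory

section Commutator

variable {E : Type*} [NormedAddCommGroup E] [MeasurableSpace E]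

theorem enorm_integral_smul_sub_smul_integral_le [OpensMeasurableSpace E] {μ : Measure E}
    {V : Type*} [NormedAddCommGroup V] [NormedSpace ℝ V]
    {g : E → ℝ} (hg : LipschitzWith 1 g) {a : E → V} (ha : Integrable a μ) (x : E) :
    ‖∫ y, g y • a y ∂μ - g x • ∫ y, a y ∂μ‖ₑ ≤ ∫⁻ y, ‖x - y‖ₑ * ‖a y‖ₑ ∂μ := by
  have hbound : ∀ y, ‖(g y - g x) • a y‖ₑ ≤ ‖x - y‖ₑ * ‖a y‖ₑ := fun y => by
    rw [enorm_smul, ← edist_eq_enorm_sub, ← edist_eq_enorm_sub, edist_comm x]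
    gcongr
    simpa using hg.edist_le_mul y x
  rcases eq_or_ne (∫⁻ y, ‖x - y‖ₑ * ‖a y‖ₑ ∂μ) ∞ with h | h
  · simp [h]
  have hdiff : Integrable (fun y => (g y - g x) • a y) μ :=
    ⟨(hg.continuous.sub continuous_const).aestronglyMeasurable.smul ha.1,
      (lintegral_mono hbound).trans_lt h.lt_top⟩
  have hsplit : ∫ y, g y • a y ∂μ = ∫ y, (g y - g x) • a y ∂μ + g x • ∫ y, a y ∂μ := by
    have hconst : Integrable (fun y => g x • a y) μ := ha.smul (g x)
    rw [← integral_smul, ← integral_add hdiff hconst]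
    simp only [← add_smul, sub_add_cancel]
  rw [hsplit, add_sub_cancel_right]
  exact (enorm_integral_le_lintegral_enorm _).trans (lintegral_mono hbound)

variable [NormedSpace ℝ E] [FiniteDimensional ℝ E] [BorelSpace E]
  {μ : Measure E} [μ.IsAddHaarMeasure]

theorem ae_enorm_convolution_commutator_le {g : E → ℝ} (hg : LipschitzWith 1 g) {φ f : E → ℂ}
    (hφ : Integrable φ μ) {p : ℝ≥0∞} (hp : 1 ≤ p) (hf : MemLp f p μ) :
    ∀ᵐ x ∂μ, ‖∫ y, φ (x - y) • (g y • f y) ∂μ - g x • ∫ y, φ (x - y) • f y ∂μ‖ₑ ≤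
      ((fun z => ‖φ z‖ₑ * ‖z‖ₑ) ⋆ₗ[μ] fun y => ‖f y‖ₑ) x := by
  have hφm : AEMeasurable (fun z => ‖φ z‖ₑ) μ := hφ.1.enorm
  have hfm : AEMeasurable (fun y => ‖f y‖ₑ) μ := hf.1.enorm
  have hconv : eLpNorm ((fun z => ‖φ z‖ₑ) ⋆ₗ[μ] fun y => ‖f y‖ₑ) p μ ≠ ∞ := by
    refine ne_top_of_le_ne_top ?_ (eLpNorm_lconvolution_le hφm hfm hp)
    rw [eLpNorm_enorm]
    exact ENNReal.mul_ne_top hφ.2.ne hf.2.ne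
  filter_upwards [ae_lt_top_of_eLpNorm_ne_top (aemeasurable_lconvolution hφm hfm)
    (zero_lt_one.trans_le hp).ne' hconv] with x hx
  rw [lconvolution_eq_lintegral_sub] at hx ⊢
  have ha : Integrable (fun y => φ (x - y) • f y) μ := by
    refine ⟨?_, by simpa only [hasFiniteIntegral_iff_enorm, enorm_smul] using hx⟩
    exact (hφ.1.comp_quasiMeasurePreserving
      (Measure.measurePreserving_sub_left μ x).quasiMeasurePreserving).smul hf.1
  simp only [smul_comm (φ _) (g _)]
  refine (enorm_integral_smul_sub_smul_integral_le hg ha x).trans_eq ?_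
  simp only [enorm_smul, mul_comm, mul_left_comm]

end Commutator

theorem jap_eq_norm (x : R2) : jap x = ‖WithLp.toLp 2 ((1 : ℝ), x)‖ := by
  simp [jap, WithLp.prod_norm_eq_of_L2]

theorem lipschitzWith_jap : LipschitzWith 1 jap := by
  refine LipschitzWith.of_dist_le_mul fun x y => ?_
  rw [Real.dist_eq, jap_eq_norm, jap_eq_norm, NNReal.coe_one, one_mul]
  refine (abs_norm_sub_norm_le _ _).trans_eq ?_
  simp [← WithLp.toLp_sub, dist_eq_norm]

theorem one_le_jap (x : R2) : 1 ≤ jap x :=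
  Real.one_le_sqrt.2 (le_add_of_nonneg_right (sq_nonneg _))

theorem lipschitzOnWith_rpow_Ici_one {δ : ℝ} (hδ0 : 0 ≤ δ) (hδ1 : δ ≤ 1) :
    LipschitzOnWith 1 (fun t : ℝ => t ^ δ) (Set.Ici 1) := by
  refine (convex_Ici 1).lipschitzOnWith_of_nnnorm_hasDerivWithin_le (fun t ht =>
    (Real.hasDerivAt_rpow_const (Or.inl (zero_lt_one.trans_le ht).ne')).hasDerivWithinAt)
    fun t ht => ?_
  have ht0 : 0 ≤ t := zero_le_one.trans (Set.mem_Ici.1 ht)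
  rw [← NNReal.coe_le_coe, coe_nnnorm, NNReal.coe_one, Real.norm_eq_abs,
    abs_of_nonneg (by positivity)]
  exact mul_le_one₀ hδ1 (by positivity) (Real.rpow_le_one_of_one_le_of_nonpos ht (by linarith))

theorem lipschitzWith_jap_rpow {δ : ℝ} (hδ0 : 0 ≤ δ) (hδ1 : δ ≤ 1) :
    LipschitzWith 1 fun x => jap x ^ δ := by
  have h := (lipschitzOnWith_rpow_Ici_one hδ0 hδ1).comp (lipschitzOnWith_univ.2 lipschitzWith_jap)
    fun x _ => one_le_jap x
  rwa [mul_one, lipschitzOnWith_univ] at h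

theorem SchwartzMap.lintegral_enorm_mul_enorm_ne_top {E V : Type*} [NormedAddCommGroup E]
    [NormedSpace ℝ E] [MeasurableSpace E] [BorelSpace E] [SecondCountableTopology E]
    [NormedAddCommGroup V] [NormedSpace ℝ V] {μ : Measure E} [μ.HasTemperateGrowth]
    (K : 𝓢(E, V)) : ∫⁻ z, ‖K z‖ₑ * ‖z‖ₑ ∂μ ≠ ∞ := by
  have h := (K.integrable_pow_mul μ 1).2.ne
  simpa only [hasFiniteIntegral_iff_enorm, pow_one, enorm_mul, enorm_norm, mul_comm] using h

theorem lintegral_enorm_smul_comp_smul_mul_enorm {E V : Type*} [NormedAddCommGroup E]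
    [NormedSpace ℝ E] [FiniteDimensional ℝ E] [MeasurableSpace E] [BorelSpace E]
    (μ : Measure E) [μ.IsAddHaarMeasure] [NormedAddCommGroup V] [NormedSpace ℝ V]
    (K : E → V) {N : ℝ} (hN : 0 < N) :
    ∫⁻ z, ‖(N ^ Module.finrank ℝ E : ℝ) • K (N • z)‖ₑ * ‖z‖ₑ ∂μ =
      ENNReal.ofReal N⁻¹ * ∫⁻ z, ‖K z‖ₑ * ‖z‖ₑ ∂μ := by
  have hscale := lintegral_map_equiv (fun u => ‖K u‖ₑ * ‖u‖ₑ) (MeasurableEquiv.smul₀ N hN.ne')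
    (μ := μ)
  rw [MeasurableEquiv.coe_smul₀, Measure.map_addHaar_smul μ hN.ne',
    lintegral_smul_measure] at hscale
  set d := Module.finrank ℝ E
  have hpt : ∀ z : E, ‖(N ^ d : ℝ) • K (N • z)‖ₑ * ‖z‖ₑ =
      ENNReal.ofReal (N ^ d * N⁻¹) * (‖K (N • z)‖ₑ * ‖N • z‖ₑ) := fun z => by
    have hz : ‖z‖ₑ = ENNReal.ofReal N⁻¹ * ‖N • z‖ₑ := by
      rw [enorm_smul, Real.enorm_eq_ofReal hN.le, ← mul_assoc, ← ENNReal.ofReal_mul (by positivity),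
        inv_mul_cancel₀ hN.ne', ENNReal.ofReal_one, one_mul]
    rw [hz, enorm_smul, Real.enorm_eq_ofReal (by positivity), ENNReal.ofReal_mul (by positivity)]
    ring
  simp only [hpt, lintegral_const_mul' _ _ ENNReal.ofReal_ne_top]
  rw [← hscale, smul_eq_mul, ← mul_assoc, ← ENNReal.ofReal_mul (by positivity),
    abs_of_nonneg (by positivity)]
  congr 2
  field_simp

theorem dy_pos (n : ℕ) : 0 < dy n := by
  unfold dy
  split_ifs <;> positivity

/-- The convolution kernel of `Δ_N`. -/
def lpKernel (K L : R2 → ℂ) (n : ℕ) : R2 → ℂ :=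
  if n = 0 then L else fun z => (dy n ^ 2 : ℝ) • K (dy n • z)

theorem LP_eq_integral (K L : R2 → ℂ) (n : ℕ) (f : R2 → ℂ) (x : R2) :
    LP K L n f x = ∫ y, lpKernel K L n (x - y) • f y := by
  unfold LP lpKernel
  split_ifs <;> simp only [smul_assoc]

theorem integrable_lpKernel {K L : R2 → ℂ} (hK : Integrable K) (hL : Integrable L) (n : ℕ) :
    Integrable (lpKernel K L n) := by
  unfold lpKernel
  split_ifs
  · exact hL
  · exact (hK.comp_smul (dy_pos n).ne').smul (dy n ^ 2 : ℝ)

theorem lintegral_enorm_lpKernel_mul_enorm_le (K L : R2 → ℂ) (n : ℕ) :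
    ∫⁻ z, ‖lpKernel K L n z‖ₑ * ‖z‖ₑ ≤
      ENNReal.ofReal (dy n)⁻¹ * ((∫⁻ z, ‖K z‖ₑ * ‖z‖ₑ) + ∫⁻ z, ‖L z‖ₑ * ‖z‖ₑ) := by
  rcases eq_or_ne n 0 with rfl | hn
  · have hdy : (dy 0)⁻¹ = 2 := by norm_num [dy]
    simp only [lpKernel, if_pos, hdy]
    calc ∫⁻ z, ‖L z‖ₑ * ‖z‖ₑ ≤ (∫⁻ z, ‖K z‖ₑ * ‖z‖ₑ) + ∫⁻ z, ‖L z‖ₑ * ‖z‖ₑ := le_add_self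
      _ ≤ _ := le_mul_of_one_le_left (by positivity) (by norm_num)
  · have h := lintegral_enorm_smul_comp_smul_mul_enorm volume K (dy_pos n)
    rw [finrank_euclideanSpace_fin] at h
    simp only [lpKernel, hn, if_false, h]
    gcongr
    exact le_self_add

theorem lp_weight_commutator_general (K L : 𝓢(R2, ℂ))
    (δ : ℝ) (hδ : δ ∈ Set.Ioo (0 : ℝ) 1) (p : ℝ≥0∞) (hp : 1 ≤ p) :
    ∃ C : ℝ, 0 < C ∧ ∀ (n : ℕ) (f : R2 → ℂ), MemLp f p volume →
      eLpNorm (fun x => LP (⇑K) (⇑L) n (fun y => (jap y ^ δ : ℝ) • f y) x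
          - (jap x ^ δ : ℝ) • LP (⇑K) (⇑L) n f x) p volume ≤
        ENNReal.ofReal (C * (dy n)⁻¹) * eLpNorm f p volume := by
  set M := (∫⁻ z, ‖K z‖ₑ * ‖z‖ₑ) + ∫⁻ z, ‖L z‖ₑ * ‖z‖ₑ
  have hM : M ≠ ∞ := ENNReal.add_ne_top.2
    ⟨K.lintegral_enorm_mul_enorm_ne_top (μ := volume),
      L.lintegral_enorm_mul_enorm_ne_top (μ := volume)⟩
  refine ⟨M.toReal + 1, by positivity, fun n f hf => ?_⟩
  have hφ := integrable_lpKernel K.integrable L.integrable n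
  have hcomm := ae_enorm_convolution_commutator_le (lipschitzWith_jap_rpow hδ.1.le hδ.2.le) hφ hp hf
  calc _ ≤ eLpNorm ((fun z => ‖lpKernel K L n z‖ₑ * ‖z‖ₑ) ⋆ₗ fun y => ‖f y‖ₑ) p volume :=
        eLpNorm_mono_enorm_ae (by simpa only [LP_eq_integral, enorm_eq_self] using hcomm)
    _ ≤ (∫⁻ z, ‖lpKernel K L n z‖ₑ * ‖z‖ₑ) * eLpNorm f p volume := by
        simpa only [eLpNorm_enorm] using
          eLpNorm_lconvolution_le (by fun_prop) hf.1.enorm hp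
    _ ≤ ENNReal.ofReal (dy n)⁻¹ * M * eLpNorm f p volume := by
        gcongr
        exact lintegral_enorm_lpKernel_mul_enorm_le K L n
    _ ≤ ENNReal.ofReal ((M.toReal + 1) * (dy n)⁻¹) * eLpNorm f p volume := by
        gcongr
        have hinv : 0 < (dy n)⁻¹ := inv_pos.2 (dy_pos n)
        conv_lhs => rw [← ENNReal.ofReal_toReal hM, ← ENNReal.ofReal_mul hinv.le]
        exact ENNReal.ofReal_le_ofReal (by nlinarith)

/-- For every `δ ∈ (0,1)` and `p ∈ [1,∞]` there exists `C > 0` such that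
for every dyadic `N` and every `f ∈ L^p(ℝ²)`,
`‖Δ_N(⟨·⟩^δ f) − ⟨·⟩^δ Δ_N f‖_{L^p} ≤ C N⁻¹ ‖f‖_{L^p}`. -/
theorem lp_weight_commutator (K L : 𝓢(R2, ℂ)) (hKL : IsLP K L)
    (δ : ℝ) (hδ : δ ∈ Set.Ioo (0 : ℝ) 1) (p : ℝ≥0∞) (hp : 1 ≤ p) :
    ∃ C : ℝ, 0 < C ∧ ∀ (n : ℕ) (f : R2 → ℂ), MemLp f p volume →
      eLpNorm (fun x => LP (⇑K) (⇑L) n (fun y => (jap y ^ δ : ℝ) • f y) x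
          - (jap x ^ δ : ℝ) • LP (⇑K) (⇑L) n f x) p volume ≤
        ENNReal.ofReal (C * (dy n)⁻¹) * eLpNorm f p volume :=
  lp_weight_commutator_general K L δ hδ p hp
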